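/- For all nonnegative integers m, ∑_{k=0}^{2m+1} (-2)^k C(2m+1,k) · k · H_k = 2(2m+1)(H_m - 2H_{2m+1}) + 2, where H_j is the j-th harmonic number. -/

import Mathlib

open Finset

noncomputable def H (n : ℕ) : ℝ := ∑ i ∈ Finset.range n, (1:ℝ)/(i+1)

/-!
Write `binomialH x n = ∑ₖ xᵏ C(n,k) Hₖ`. Pascal's rule together with `H_{k+1} = H_k + 1/(k+1)` and
`∑ₖ x^{k+1} C(n,k)/(k+1) = ((1+x)^{n+1} - 1)/(n+1)` give the recurrence
`binomialH x (n+1) = (1+x) binomialH x n + ((1+x)^{n+1} - 1)/(n+1)`, and at `x = -2` two steps of it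
show `binomialH (-2) (2m) = 2 H_{2m} - H_m`. Finally `k C(2m+1,k) = (2m+1) C(2m,k-1)` reduces the
sum of the theorem to `binomialH (-2) (2m)` by the same computation.
-/

theorem H_zero : H 0 = 0 := by simp [H]

theorem H_succ (n : ℕ) : H (n + 1) = H n + 1 / (n + 1) := by
  simp [H, sum_range_succ]

noncomputable def binomialH (x : ℝ) (n : ℕ) : ℝ :=
  ∑ k ∈ range (n + 1), x ^ k * n.choose k * H k

theorem cast_add_one_mul_choose (n k : ℕ) :
    ((n : ℝ) + 1) * n.choose k = (n + 1).choose (k + 1) * ((k : ℝ) + 1) := by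
  exact_mod_cast Nat.add_one_mul_choose_eq n k

theorem sum_range_pow_succ_mul_choose_succ (x : ℝ) (n : ℕ) :
    ∑ k ∈ range n, x ^ (k + 1) * n.choose (k + 1) = (1 + x) ^ n - 1 := by
  rw [add_comm, add_pow, sum_range_succ']
  simp

theorem sum_range_pow_succ_mul_choose_div_succ (x : ℝ) (n : ℕ) :
    ∑ k ∈ range (n + 1), x ^ (k + 1) * n.choose k / (k + 1) = ((1 + x) ^ (n + 1) - 1) / (n + 1) := by
  rw [← sum_range_pow_succ_mul_choose_succ, sum_div]
  refine sum_congr rfl fun k _ => ?_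
  field_simp
  linear_combination x ^ (k + 1) * cast_add_one_mul_choose n k

theorem sum_range_pow_succ_mul_choose_mul_H_succ (x : ℝ) (n : ℕ) :
    ∑ k ∈ range (n + 1), x ^ (k + 1) * n.choose k * H (k + 1)
      = x * binomialH x n + ((1 + x) ^ (n + 1) - 1) / (n + 1) := by
  rw [← sum_range_pow_succ_mul_choose_div_succ, binomialH, mul_sum, ← sum_add_distrib]
  refine sum_congr rfl fun k _ => ?_
  rw [H_succ]
  ring

theorem sum_range_pow_succ_mul_choose_succ_mul_H_succ (x : ℝ) (n : ℕ) :
    ∑ k ∈ range (n + 1), x ^ (k + 1) * n.choose (k + 1) * H (k + 1) = binomialH x n := by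
  rw [sum_range_succ, Nat.choose_succ_self, binomialH, sum_range_succ' _ n]
  simp [H_zero]

theorem binomialH_succ (x : ℝ) (n : ℕ) :
    binomialH x (n + 1) = (1 + x) * binomialH x n + ((1 + x) ^ (n + 1) - 1) / (n + 1) := by
  have hpascal : binomialH x (n + 1)
      = ∑ k ∈ range (n + 1), x ^ (k + 1) * n.choose k * H (k + 1)
        + ∑ k ∈ range (n + 1), x ^ (k + 1) * n.choose (k + 1) * H (k + 1) := by
    rw [binomialH, sum_range_succ', ← sum_add_distrib]
    simp only [Nat.choose_succ_succ', Nat.cast_add, H_zero, mul_zero, add_zero]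
    exact sum_congr rfl fun k _ => by ring
  rw [hpascal, sum_range_pow_succ_mul_choose_mul_H_succ,
    sum_range_pow_succ_mul_choose_succ_mul_H_succ]
  ring

theorem binomialH_neg_two_two_mul (m : ℕ) : binomialH (-2) (2 * m) = 2 * H (2 * m) - H m := by
  induction m with
  | zero => simp [binomialH, H_zero]
  | succ m ih =>
    rw [show 2 * (m + 1) = 2 * m + 1 + 1 by ring, binomialH_succ, binomialH_succ, ih,
      H_succ, H_succ, H_succ]
    have hodd : (-1 : ℝ) ^ (2 * m + 1) = -1 := Odd.neg_one_pow ⟨m, rfl⟩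
    have heven : (-1 : ℝ) ^ (2 * m + 1 + 1) = 1 := Even.neg_one_pow ⟨m + 1, by ring⟩
    norm_num only [hodd, heven]
    push_cast
    field_simp
    ring

theorem sum_range_pow_mul_choose_succ_mul_mul_H (x : ℝ) (n : ℕ) :
    ∑ k ∈ range (n + 2), x ^ k * ((n + 1).choose k : ℝ) * (k : ℝ) * H k
      = (n + 1) * x * binomialH x n + (1 + x) ^ (n + 1) - 1 := by
  have habsorb : ∀ k ∈ range (n + 1),
      x ^ (k + 1) * ((n + 1).choose (k + 1) : ℝ) * ((k + 1 : ℕ) : ℝ) * H (k + 1)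
        = (n + 1) * (x ^ (k + 1) * n.choose k * H (k + 1)) := by
    intro k _
    push_cast
    linear_combination -(x ^ (k + 1) * H (k + 1)) * cast_add_one_mul_choose n k
  rw [sum_range_succ', sum_congr rfl habsorb, ← mul_sum,
    sum_range_pow_succ_mul_choose_mul_H_succ]
  field_simp
  ring

theorem stmt5 (m : ℕ) :
    ∑ k ∈ Finset.range (2*m+2), (-2:ℝ)^k * ((2*m+1).choose k : ℝ) * (k:ℝ) * H k
      = 2 * (2*(m:ℝ)+1) * (H m - 2 * H (2*m+1)) + 2 := by
  have hodd : (-1 : ℝ) ^ (2 * m + 1) = -1 := Odd.neg_one_pow ⟨m, rfl⟩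
  rw [sum_range_pow_mul_choose_succ_mul_mul_H, binomialH_neg_two_two_mul, H_succ]
  norm_num only [hodd]
  push_cast
  field_simp
  ring
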